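/- Let Φ₁, Φ₂, Φ₃ : [0,∞) → [0,∞) be Young functions with generalized inverses Φᵢ⁻¹(s) := inf { r ≥ 0 : Φᵢ(r) > s }, and suppose Φ₁⁻¹(t)·Φ₂⁻¹(t) ≤ Φ₃⁻¹(t) for every t ≥ 0. If f, g : ℝⁿ → ℝ are measurable with ‖f‖_{L_{Φ₁}} < ∞ and ‖g‖_{L_{Φ₂}} < ∞, then ‖f·g‖_{L_{Φ₃}} ≤ 2·‖f‖_{L_{Φ₁}}·‖g‖_{L_{Φ₂}} (in particular fg ∈ L_{Φ₃}(ℝⁿ)). -/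

import Mathlib

open MeasureTheory Filter Set
open scoped ENNReal

/-- A Young function: convex on `[0,∞)`, left-continuous, `Φ 0 = 0`,
`Φ t → ∞` as `t → ∞`, and taking values in `[0,∞)`. -/
def IsYoungFunction (Φ : ℝ → ℝ) : Prop :=
  ConvexOn ℝ (Set.Ici 0) Φ ∧
  (∀ t : ℝ, 0 ≤ t → ContinuousWithinAt Φ (Set.Iic t) t) ∧
  Φ 0 = 0 ∧
  Tendsto Φ atTop atTop ∧
  ∀ t : ℝ, 0 ≤ t → 0 ≤ Φ t

/-- Generalized inverse `Φ⁻¹(s) = inf {r ≥ 0 : Φ r > s}`. -/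
noncomputable def youngInv (Φ : ℝ → ℝ) (s : ℝ) : ℝ :=
  sInf {r : ℝ | 0 ≤ r ∧ s < Φ r}

/-- The Luxemburg (Orlicz) norm of `f` on `ℝⁿ`, valued in `ℝ≥0∞`
(`∞` when no admissible `b` exists). -/
noncomputable def luxNorm {n : ℕ} (Φ : ℝ → ℝ) (f : EuclideanSpace ℝ (Fin n) → ℝ) : ℝ≥0∞ :=
  sInf (ENNReal.ofReal ''
    {b : ℝ | 0 < b ∧ ∫⁻ x, ENNReal.ofReal (Φ (|f x| / b)) ≤ 1})

/-! For `u, v ≥ 0` put `t = Φ₁ u + Φ₂ v`. Then `u ≤ Φ₁⁻¹ t` and `v ≤ Φ₂⁻¹ t`, so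
`uv ≤ Φ₃⁻¹ t`, and left continuity gives `Φ₃ (Φ₃⁻¹ t) ≤ t`: this is the Young-type inequality
`Φ₃ (uv) ≤ Φ₁ u + Φ₂ v`. For admissible `a` (for `f`, `Φ₁`) and `b` (for `g`, `Φ₂`), apply it to
`u = |f|/a`, `v = |g|/b`; convexity and `Φ₃ 0 = 0` give `Φ₃ (uv/2) ≤ (Φ₁ u + Φ₂ v)/2`, whose
integral is at most `1`. Hence `2ab` is admissible for `fg` and `Φ₃`, and the bound follows by
taking infima over `a` and `b`. -/

namespace IsYoungFunction

variable {Φ : ℝ → ℝ}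

theorem apply_mul_le (h : IsYoungFunction Φ) {c x : ℝ} (hc₀ : 0 ≤ c) (hc₁ : c ≤ 1)
    (hx : 0 ≤ x) : Φ (c * x) ≤ c * Φ x := by
  have := h.1.2 (mem_Ici.2 le_rfl) (mem_Ici.2 hx) (sub_nonneg.2 hc₁) hc₀ (sub_add_cancel 1 c)
  simpa [h.2.2.1] using this

theorem monotoneOn (h : IsYoungFunction Φ) : MonotoneOn Φ (Ici 0) := by
  rintro x (hx : 0 ≤ x) y (hy : 0 ≤ y) hxy
  rcases hy.eq_or_lt with rfl | hy
  · rw [le_antisymm hxy hx]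
  calc Φ x = Φ (x / y * y) := by rw [div_mul_cancel₀ x hy.ne']
    _ ≤ x / y * Φ y := h.apply_mul_le (by positivity) ((div_le_one hy).2 hxy) hy.le
    _ ≤ Φ y := mul_le_of_le_one_left (h.2.2.2.2 y hy.le) ((div_le_one hy).2 hxy)

theorem measurable_comp (h : IsYoungFunction Φ) {α : Type*} [MeasurableSpace α] {u : α → ℝ}
    (hu : Measurable u) (hu₀ : ∀ x, 0 ≤ u x) : Measurable fun x => Φ (u x) := by
  have hmono : Monotone fun r : Ici (0 : ℝ) => Φ r := fun r s hrs => h.monotoneOn r.2 s.2 hrs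
  exact hmono.measurable.comp (hu.subtype_mk (h := hu₀))

theorem nonempty_setOf_lt_apply (h : IsYoungFunction Φ) (s : ℝ) :
    {r : ℝ | 0 ≤ r ∧ s < Φ r}.Nonempty := by
  obtain ⟨r, hr, hr₀⟩ :=
    ((h.2.2.2.1.eventually (eventually_gt_atTop s)).and (eventually_ge_atTop 0)).exists
  exact ⟨r, hr₀, hr⟩

end IsYoungFunction

section youngInv

variable {Φ : ℝ → ℝ}

theorem youngInv_nonneg (Φ : ℝ → ℝ) (s : ℝ) : 0 ≤ youngInv Φ s :=
  Real.sInf_nonneg fun _ hr => hr.1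

theorem youngInv_mono (h : IsYoungFunction Φ) : Monotone (youngInv Φ) :=
  fun _ t hst => csInf_le_csInf ⟨0, fun _ hr => hr.1⟩ (h.nonempty_setOf_lt_apply t)
    fun _ ⟨hr₀, hr⟩ => ⟨hr₀, hst.trans_lt hr⟩

theorem le_youngInv_apply (h : IsYoungFunction Φ) {a : ℝ} (ha : 0 ≤ a) :
    a ≤ youngInv Φ (Φ a) :=
  le_csInf (h.nonempty_setOf_lt_apply _) fun _ ⟨hr₀, hr⟩ =>
    le_of_not_gt fun hra => (h.monotoneOn hr₀ ha hra.le).not_gt hr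

theorem apply_youngInv_le (h : IsYoungFunction Φ) {t : ℝ} (ht : 0 ≤ t) :
    Φ (youngInv Φ t) ≤ t := by
  set c := youngInv Φ t
  rcases (youngInv_nonneg Φ t : 0 ≤ c).eq_or_lt with hc | hc
  · rw [show c = 0 from hc.symm, h.2.2.1]; exact ht
  have hbelow : ∀ r, 0 < r → r < c → Φ r ≤ t := fun r hr₀ hrc =>
    le_of_not_gt fun hr =>
      (csInf_le (s := {r | 0 ≤ r ∧ t < Φ r}) ⟨0, fun _ hr => hr.1⟩ ⟨hr₀.le, hr⟩).not_gt hrc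
  refine le_of_tendsto ((h.2.1 c hc.le).mono Iio_subset_Iic_self) ?_
  filter_upwards [self_mem_nhdsWithin, mem_nhdsWithin_of_mem_nhds (Ioi_mem_nhds hc)]
    with r hrc hr₀ using hbelow r hr₀ hrc

end youngInv

theorem apply_mul_le_add_of_youngInv_mul_le {Φ₁ Φ₂ Φ₃ : ℝ → ℝ} (h₁ : IsYoungFunction Φ₁)
    (h₂ : IsYoungFunction Φ₂) (h₃ : IsYoungFunction Φ₃)
    (hinv : ∀ t : ℝ, 0 ≤ t → youngInv Φ₁ t * youngInv Φ₂ t ≤ youngInv Φ₃ t)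
    {a b : ℝ} (ha : 0 ≤ a) (hb : 0 ≤ b) : Φ₃ (a * b) ≤ Φ₁ a + Φ₂ b := by
  set t := Φ₁ a + Φ₂ b
  have hΦ₁ : 0 ≤ Φ₁ a := h₁.2.2.2.2 a ha
  have hΦ₂ : 0 ≤ Φ₂ b := h₂.2.2.2.2 b hb
  have hat : a ≤ youngInv Φ₁ t :=
    (le_youngInv_apply h₁ ha).trans (youngInv_mono h₁ (le_add_of_nonneg_right hΦ₂))
  have hbt : b ≤ youngInv Φ₂ t :=
    (le_youngInv_apply h₂ hb).trans (youngInv_mono h₂ (le_add_of_nonneg_left hΦ₁))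
  have habt : a * b ≤ youngInv Φ₃ t :=
    (mul_le_mul hat hbt hb (youngInv_nonneg Φ₁ t)).trans (hinv t (by positivity))
  calc Φ₃ (a * b) ≤ Φ₃ (youngInv Φ₃ t) :=
        h₃.monotoneOn (mul_nonneg ha hb) (youngInv_nonneg Φ₃ t) habt
    _ ≤ t := apply_youngInv_le h₃ (by positivity)

def luxAdmissible {α : Type*} [MeasurableSpace α] (μ : Measure α) (Φ : ℝ → ℝ) (f : α → ℝ) :
    Set ℝ :=
  {b : ℝ | 0 < b ∧ ∫⁻ x, ENNReal.ofReal (Φ (|f x| / b)) ∂μ ≤ 1}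

theorem mul_mem_luxAdmissible {α : Type*} [MeasurableSpace α] {μ : Measure α}
    {Φ₁ Φ₂ Φ₃ : ℝ → ℝ} (h₁ : IsYoungFunction Φ₁) (h₂ : IsYoungFunction Φ₂)
    (h₃ : IsYoungFunction Φ₃)
    (hinv : ∀ t : ℝ, 0 ≤ t → youngInv Φ₁ t * youngInv Φ₂ t ≤ youngInv Φ₃ t)
    {f g : α → ℝ} (hf : Measurable f) {a b : ℝ} (ha : a ∈ luxAdmissible μ Φ₁ f)
    (hb : b ∈ luxAdmissible μ Φ₂ g) :
    2 * a * b ∈ luxAdmissible μ Φ₃ (fun x => f x * g x) := by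
  obtain ⟨ha₀, hfa⟩ := ha
  obtain ⟨hb₀, hgb⟩ := hb
  have hpoint : ∀ x, 2 * ENNReal.ofReal (Φ₃ (|f x * g x| / (2 * a * b)))
      ≤ ENNReal.ofReal (Φ₁ (|f x| / a)) + ENNReal.ofReal (Φ₂ (|g x| / b)) := fun x => by
    have hu : 0 ≤ |f x| / a := by positivity
    have hv : 0 ≤ |g x| / b := by positivity
    have hsplit : |f x * g x| / (2 * a * b) = 1 / 2 * (|f x| / a * (|g x| / b)) := by
      rw [abs_mul]; field_simp
    have hhalf := h₃.apply_mul_le (c := 1 / 2) (by norm_num) (by norm_num) (mul_nonneg hu hv)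
    have hyoung := apply_mul_le_add_of_youngInv_mul_le h₁ h₂ h₃ hinv hu hv
    rw [← ENNReal.ofReal_ofNat 2, ← ENNReal.ofReal_mul zero_le_two, hsplit]
    exact (ENNReal.ofReal_le_ofReal (by linarith)).trans ENNReal.ofReal_add_le
  have hmeas : Measurable fun x => ENNReal.ofReal (Φ₁ (|f x| / a)) :=
    ENNReal.measurable_ofReal.comp
      (h₁.measurable_comp (hf.abs.div_const a) fun x => by positivity)
  refine ⟨by positivity, (ENNReal.mul_le_mul_iff_right two_ne_zero ENNReal.ofNat_ne_top).1 ?_⟩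
  calc 2 * ∫⁻ x, ENNReal.ofReal (Φ₃ (|f x * g x| / (2 * a * b))) ∂μ
      = ∫⁻ x, 2 * ENNReal.ofReal (Φ₃ (|f x * g x| / (2 * a * b))) ∂μ :=
        (lintegral_const_mul' _ _ ENNReal.ofNat_ne_top).symm
    _ ≤ ∫⁻ x, ENNReal.ofReal (Φ₁ (|f x| / a)) + ENNReal.ofReal (Φ₂ (|g x| / b)) ∂μ :=
        lintegral_mono hpoint
    _ = (∫⁻ x, ENNReal.ofReal (Φ₁ (|f x| / a)) ∂μ) + ∫⁻ x, ENNReal.ofReal (Φ₂ (|g x| / b)) ∂μ :=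
        lintegral_add_left hmeas _
    _ ≤ 2 * 1 := by rw [two_mul]; exact add_le_add hfa hgb

theorem luxNorm_eq_iInf {n : ℕ} (Φ : ℝ → ℝ) (f : EuclideanSpace ℝ (Fin n) → ℝ) :
    luxNorm Φ f = ⨅ b : luxAdmissible volume Φ f, ENNReal.ofReal b :=
  sInf_image'

theorem luxNorm_le_ofReal {n : ℕ} {Φ : ℝ → ℝ} {f : EuclideanSpace ℝ (Fin n) → ℝ} {b : ℝ}
    (hb : b ∈ luxAdmissible volume Φ f) : luxNorm Φ f ≤ ENNReal.ofReal b :=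
  sInf_le (mem_image_of_mem _ hb)

theorem nonempty_luxAdmissible_of_luxNorm_lt_top {n : ℕ} {Φ : ℝ → ℝ}
    {f : EuclideanSpace ℝ (Fin n) → ℝ} (hf : luxNorm Φ f < ⊤) :
    (luxAdmissible volume Φ f).Nonempty := by
  rw [luxNorm_eq_iInf, iInf_lt_iff] at hf
  obtain ⟨b, -⟩ := hf
  exact ⟨b, b.2⟩

theorem luxNorm_mul_le_general {n : ℕ} (Φ₁ Φ₂ Φ₃ : ℝ → ℝ)
    (h₁ : IsYoungFunction Φ₁) (h₂ : IsYoungFunction Φ₂) (h₃ : IsYoungFunction Φ₃)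
    (hinv : ∀ t : ℝ, 0 ≤ t → youngInv Φ₁ t * youngInv Φ₂ t ≤ youngInv Φ₃ t)
    (f g : EuclideanSpace ℝ (Fin n) → ℝ) (hf : Measurable f)
    (hf' : luxNorm Φ₁ f < ⊤) (hg' : luxNorm Φ₂ g < ⊤) :
    luxNorm Φ₃ (fun x => f x * g x) ≤ 2 * luxNorm Φ₁ f * luxNorm Φ₂ g := by
  obtain ⟨a₀, ha₀⟩ := nonempty_luxAdmissible_of_luxNorm_lt_top hf'
  obtain ⟨b₀, hb₀⟩ := nonempty_luxAdmissible_of_luxNorm_lt_top hg'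
  rw [luxNorm_eq_iInf Φ₁, luxNorm_eq_iInf Φ₂,
    ENNReal.mul_iInf_of_ne two_ne_zero ENNReal.ofNat_ne_top]
  refine ENNReal.le_iInf_mul_iInf
    ⟨⟨a₀, ha₀⟩, ENNReal.mul_ne_top ENNReal.ofNat_ne_top ENNReal.ofReal_ne_top⟩
    ⟨⟨b₀, hb₀⟩, ENNReal.ofReal_ne_top⟩ fun a b => ?_
  calc luxNorm Φ₃ (fun x => f x * g x) ≤ ENNReal.ofReal (2 * a * b) :=
        luxNorm_le_ofReal (mul_mem_luxAdmissible h₁ h₂ h₃ hinv hf a.2 b.2)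
    _ = 2 * ENNReal.ofReal a * ENNReal.ofReal b := by
        rw [ENNReal.ofReal_mul (mul_pos two_pos a.2.1).le, ENNReal.ofReal_mul zero_le_two,
          ENNReal.ofReal_ofNat]

theorem luxNorm_mul_le {n : ℕ} (hn : 0 < n) (Φ₁ Φ₂ Φ₃ : ℝ → ℝ)
    (h₁ : IsYoungFunction Φ₁) (h₂ : IsYoungFunction Φ₂) (h₃ : IsYoungFunction Φ₃)
    (hinv : ∀ t : ℝ, 0 ≤ t → youngInv Φ₁ t * youngInv Φ₂ t ≤ youngInv Φ₃ t)
    (f g : EuclideanSpace ℝ (Fin n) → ℝ) (hf : Measurable f) (hg : Measurable g)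
    (hf' : luxNorm Φ₁ f < ⊤) (hg' : luxNorm Φ₂ g < ⊤) :
    luxNorm Φ₃ (fun x => f x * g x) ≤ 2 * luxNorm Φ₁ f * luxNorm Φ₂ g :=
  luxNorm_mul_le_general Φ₁ Φ₂ Φ₃ h₁ h₂ h₃ hinv f g hf hf' hg'
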